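/- (Contraction of products of centered kernels.) Let P₁, …, P_{H−1} be row-stochastic matrices on a finite set Z, each P_h admitting a stationary distribution ν_h, and let Π_h be the matrix with every row equal to ν_h. Then for every g : Z → ℝ: ‖ ( Π_{h=1}^{H−1} (P_h − Π_h) )·g ‖_∞ ≤ 2·( Π_{h=1}^{H−1} δ(P_h) )·‖g‖_∞. In particular, if every P_h is η-regular for some η ≥ 1, then ‖ ( Π_{h=1}^{H−1} (P_h − Π_h) )·g ‖_∞ ≤ 2·(1 − 1/η)^{H−1}·‖g‖_∞. -/

import Mathlib

/-!
Write `osc v = max v - min v`. If the rows of `M` all have the same sum, each difference of two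
rows has total mass zero, so `v` may be centred at the midpoint of its range, and
`osc (M v) ≤ δ(M) · osc v`. Centring `P` by `Π` changes no row difference, hence not `δ`, and
stationarity says `ν (P - Π) = 0`: the leftmost factor produces a function of `ν`-mean zero,
whose sup norm is at most its oscillation. Chaining,
`‖M g‖ ≤ osc (M g) ≤ (∏ δ(P_h)) · osc g ≤ 2 (∏ δ(P_h)) ‖g‖`. For an `η`-regular kernel
`min (P x z) (P y z) ≥ P x z / η`, which gives `δ(P) ≤ 1 - 1/η`.
-/

open Finset

/-- `μ` is a probability mass function on the finite type `Z`. -/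
def IsPMF {Z : Type*} [Fintype Z] (μ : Z → ℝ) : Prop :=
  (∀ z, 0 ≤ μ z) ∧ ∑ z, μ z = 1

/-- A row-stochastic kernel on `Z`. -/
def IsRowStochastic {Z : Type*} [Fintype Z] (P : Z → Z → ℝ) : Prop :=
  (∀ x y, 0 ≤ P x y) ∧ ∀ x, ∑ y, P x y = 1

/-- An `η`-regular row-stochastic kernel. -/
def IsRegularKernel {Z : Type*} [Fintype Z] (η : ℝ) (P : Z → Z → ℝ) : Prop :=
  IsRowStochastic P ∧ (∀ x y, 0 < P x y) ∧
    ∀ x y z, P x y ≤ η * P x z ∧ P y x ≤ η * P z x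

/-- Sup norm of a function on a finite nonempty type. -/
noncomputable def supNorm {Z : Type*} [Fintype Z] [Nonempty Z] (φ : Z → ℝ) : ℝ :=
  Finset.univ.sup' Finset.univ_nonempty fun z => |φ z|

/-- Dobrushin ergodic coefficient `δ(P) = max_{x,y} d_TV(P(x,·), P(y,·))`. -/
noncomputable def dobrushin {Z : Type*} [Fintype Z] [Nonempty Z] (P : Matrix Z Z ℝ) : ℝ :=
  Finset.univ.sup' Finset.univ_nonempty fun q : Z × Z =>
    (1 / 2) * ∑ z, |P q.1 z - P q.2 z|

open Matrix

section Oscillation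
variable {Z : Type*} [Fintype Z] [Nonempty Z]

noncomputable def osc (φ : Z → ℝ) : ℝ :=
  univ.sup' univ_nonempty φ - univ.inf' univ_nonempty φ

lemma univ_inf'_le (φ : Z → ℝ) (z : Z) : univ.inf' univ_nonempty φ ≤ φ z :=
  inf'_le φ (mem_univ z)

lemma le_univ_sup' (φ : Z → ℝ) (z : Z) : φ z ≤ univ.sup' univ_nonempty φ :=
  le_sup' φ (mem_univ z)

lemma sub_le_osc (φ : Z → ℝ) (x y : Z) : φ x - φ y ≤ osc φ :=
  sub_le_sub (le_univ_sup' φ x) (univ_inf'_le φ y)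

lemma osc_nonneg (φ : Z → ℝ) : 0 ≤ osc φ := by
  simpa using sub_le_osc φ (Classical.arbitrary Z) (Classical.arbitrary Z)

lemma osc_le_of_forall_sub_le {φ : Z → ℝ} {c : ℝ} (h : ∀ x y, φ x - φ y ≤ c) :
    osc φ ≤ c := by
  obtain ⟨x, -, hx⟩ := exists_mem_eq_sup' univ_nonempty φ
  obtain ⟨y, -, hy⟩ := exists_mem_eq_inf' univ_nonempty φ
  rw [osc, hx, hy]
  exact h x y

lemma abs_le_supNorm (φ : Z → ℝ) (z : Z) : |φ z| ≤ supNorm φ :=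
  le_sup' (fun z => |φ z|) (mem_univ z)

lemma supNorm_nonneg (φ : Z → ℝ) : 0 ≤ supNorm φ :=
  (abs_nonneg _).trans (abs_le_supNorm φ (Classical.arbitrary Z))

lemma supNorm_le {φ : Z → ℝ} {c : ℝ} (h : ∀ z, |φ z| ≤ c) : supNorm φ ≤ c :=
  sup'_le _ _ fun z _ => h z

lemma osc_le_two_mul_supNorm (φ : Z → ℝ) : osc φ ≤ 2 * supNorm φ :=
  osc_le_of_forall_sub_le fun x y => by
    linarith [abs_sub (φ x) (φ y), abs_le_supNorm φ x, abs_le_supNorm φ y, le_abs_self (φ x - φ y)]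

/-- Mean zero forces `min f ≤ 0 ≤ max f`. -/
lemma supNorm_le_osc_of_sum_mul_eq_zero {μ f : Z → ℝ} (hμ : IsPMF μ)
    (hf : ∑ z, μ z * f z = 0) : supNorm f ≤ osc f := by
  have hmean : ∀ c, ∑ z, μ z * c = c := fun c => by rw [← sum_mul, hμ.2, one_mul]
  have hinf : univ.inf' univ_nonempty f ≤ 0 := by
    rw [← hf, ← hmean (univ.inf' univ_nonempty f)]
    exact sum_le_sum fun z _ => mul_le_mul_of_nonneg_left (univ_inf'_le f z) (hμ.1 z)
  have hsup : 0 ≤ univ.sup' univ_nonempty f := by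
    rw [← hf, ← hmean (univ.sup' univ_nonempty f)]
    exact sum_le_sum fun z _ => mul_le_mul_of_nonneg_left (le_univ_sup' f z) (hμ.1 z)
  refine supNorm_le fun z => abs_le.2 ⟨?_, ?_⟩ <;> rw [osc] <;>
    linarith [univ_inf'_le f z, le_univ_sup' f z]

/-- Centring `v` at the midpoint `c` of its range costs nothing because `p - q` has total mass
zero, and then `|v - c| ≤ osc v / 2`. -/
lemma abs_sum_sub_mul_le_of_sum_eq (p q v : Z → ℝ) (hpq : ∑ z, p z = ∑ z, q z) :
    |∑ z, (p z - q z) * v z| ≤ (1 / 2 * ∑ z, |p z - q z|) * osc v := by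
  set c := (univ.sup' univ_nonempty v + univ.inf' univ_nonempty v) / 2 with hc
  have hcentre : ∑ z, (p z - q z) * v z = ∑ z, (p z - q z) * (v z - c) := by
    simp only [mul_sub, sum_sub_distrib (f := fun z => (p z - q z) * v z), ← sum_mul,
      sum_sub_distrib (f := p), hpq, sub_self, zero_mul, sub_zero]
  have hv : ∀ z, |v z - c| ≤ osc v / 2 := fun z => by
    rw [abs_le, osc]
    constructor <;> linarith [univ_inf'_le v z, le_univ_sup' v z, hc]
  calc |∑ z, (p z - q z) * v z| = |∑ z, (p z - q z) * (v z - c)| := by rw [hcentre]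
    _ ≤ ∑ z, |p z - q z| * (osc v / 2) := (abs_sum_le_sum_abs _ _).trans <| sum_le_sum fun z _ => by
      rw [abs_mul]
      exact mul_le_mul_of_nonneg_left (hv z) (abs_nonneg _)
    _ = (1 / 2 * ∑ z, |p z - q z|) * osc v := by rw [← sum_mul]; ring

end Oscillation

section Dobrushin
variable {Z : Type*} [Fintype Z] [Nonempty Z]

lemma half_sum_abs_sub_le_dobrushin (M : Matrix Z Z ℝ) (x y : Z) :
    1 / 2 * ∑ z, |M x z - M y z| ≤ dobrushin M :=
  le_sup' (fun q : Z × Z => 1 / 2 * ∑ z, |M q.1 z - M q.2 z|) (mem_univ (x, y))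

lemma dobrushin_nonneg (M : Matrix Z Z ℝ) : 0 ≤ dobrushin M := by
  simpa using half_sum_abs_sub_le_dobrushin M (Classical.arbitrary Z) (Classical.arbitrary Z)

lemma osc_mulVec_le {M : Matrix Z Z ℝ} (hM : ∀ x y, ∑ z, M x z = ∑ z, M y z) (v : Z → ℝ) :
    osc (M *ᵥ v) ≤ dobrushin M * osc v :=
  osc_le_of_forall_sub_le fun x y => by
    have hdiff : (M *ᵥ v) x - (M *ᵥ v) y = ∑ z, (M x z - M y z) * v z := by
      simp only [mulVec, dotProduct, ← sum_sub_distrib, sub_mul]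
    rw [hdiff]
    exact (le_abs_self _).trans <| (abs_sum_sub_mul_le_of_sum_eq _ _ v (hM x y)).trans <|
      mul_le_mul_of_nonneg_right (half_sum_abs_sub_le_dobrushin M x y) (osc_nonneg v)

lemma osc_list_prod_mulVec_le [DecidableEq Z] {L : List (Matrix Z Z ℝ)}
    (hL : ∀ M ∈ L, ∀ x y, ∑ z, M x z = ∑ z, M y z) (v : Z → ℝ) :
    osc (L.prod *ᵥ v) ≤ (L.map dobrushin).prod * osc v := by
  induction L with
  | nil => simp
  | cons M L ih =>
    rw [List.prod_cons, ← mulVec_mulVec, List.map_cons, List.prod_cons, mul_assoc]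
    have hM := hL M List.mem_cons_self
    exact (osc_mulVec_le hM _).trans <| mul_le_mul_of_nonneg_left
      (ih fun N hN => hL N (List.mem_cons_of_mem M hN)) (dobrushin_nonneg M)

lemma supNorm_list_prod_mulVec_le [DecidableEq Z] {L : List (Matrix Z Z ℝ)}
    (hrow : ∀ M ∈ L, ∀ x y, ∑ z, M x z = ∑ z, M y z)
    (hnull : ∀ M ∈ L, ∃ μ, IsPMF μ ∧ μ ᵥ* M = 0) (v : Z → ℝ) :
    supNorm (L.prod *ᵥ v) ≤ 2 * (L.map dobrushin).prod * supNorm v := by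
  cases L with
  | nil => simpa using le_mul_of_one_le_left (supNorm_nonneg v) one_le_two
  | cons M L =>
    obtain ⟨μ, hμ, hμM⟩ := hnull M List.mem_cons_self
    have hmean : ∑ z, μ z * (M *ᵥ (L.prod *ᵥ v)) z = 0 := by
      rw [← dotProduct, dotProduct_mulVec, hμM, zero_dotProduct]
    calc supNorm ((M :: L).prod *ᵥ v) ≤ osc ((M :: L).prod *ᵥ v) := by
          rw [List.prod_cons, ← mulVec_mulVec]
          exact supNorm_le_osc_of_sum_mul_eq_zero hμ hmean
      _ ≤ ((M :: L).map dobrushin).prod * osc v := osc_list_prod_mulVec_le hrow v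
      _ ≤ ((M :: L).map dobrushin).prod * (2 * supNorm v) :=
          mul_le_mul_of_nonneg_left (osc_le_two_mul_supNorm v)
            (List.prod_nonneg fun _ hd => by
              obtain ⟨N, -, rfl⟩ := List.mem_map.1 hd
              exact dobrushin_nonneg N)
      _ = 2 * ((M :: L).map dobrushin).prod * supNorm v := by ring

lemma dobrushin_le_of_isRegularKernel {η : ℝ} (hη : 1 ≤ η) {P : Matrix Z Z ℝ}
    (hP : IsRegularKernel η fun x y => P x y) : dobrushin P ≤ 1 - 1 / η := by
  obtain ⟨⟨hnonneg, hrow⟩, -, hcomp⟩ := hP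
  refine sup'_le _ _ fun ⟨x, y⟩ _ => ?_
  have hη0 : 0 < η := one_pos.trans_le hη
  -- `|a - b| = a + b - 2 min a b` and `min a b ≥ a / η`.
  have hpoint : ∀ z, |P x z - P y z| ≤ P x z + P y z - 2 / η * P x z := fun z => by
    have hxy : P x z / η ≤ P y z := by rw [div_le_iff₀ hη0]; linarith [(hcomp z x y).2]
    have hxx : P x z / η ≤ P x z := div_le_self (hnonneg x z) hη
    rw [abs_le, div_mul_eq_mul_div]
    constructor <;> linarith [mul_div_assoc 2 (P x z) η]
  calc 1 / 2 * ∑ z, |P x z - P y z|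
      ≤ 1 / 2 * ∑ z, (P x z + P y z - 2 / η * P x z) := by gcongr with z; exact hpoint z
    _ = 1 - 1 / η := by
      rw [sum_sub_distrib, sum_add_distrib, ← mul_sum, hrow x, hrow y]; ring

lemma dobrushin_sub_constRows (P : Matrix Z Z ℝ) (ν : Z → ℝ) :
    dobrushin (P - of fun _ y => ν y) = dobrushin P := by
  simp only [dobrushin, Matrix.sub_apply, of_apply, sub_sub_sub_cancel_right]

end Dobrushin

section CenteredKernel
variable {Z : Type*} [Fintype Z] {P : Matrix Z Z ℝ} {ν : Z → ℝ}

lemma sum_sub_constRows_eq_zero (hP : IsRowStochastic fun x y => P x y) (hν : IsPMF ν) (x : Z) :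
    ∑ z, (P - of fun _ y => ν y : Matrix Z Z ℝ) x z = 0 := by
  simp only [Matrix.sub_apply, of_apply, sum_sub_distrib, hP.2 x, hν.2, sub_self]

lemma vecMul_sub_constRows_eq_zero (hν : IsPMF ν) (hstat : ∀ y, ∑ x, ν x * P x y = ν y) :
    ν ᵥ* (P - of fun _ y => ν y) = 0 := by
  rw [vecMul_sub, sub_eq_zero]
  ext y
  simp only [vecMul, dotProduct, of_apply, ← sum_mul, hν.2, one_mul]
  exact hstat y

end CenteredKernel

/-- `N` plays the role of `H − 1`: the kernels are `P 0, …, P (N-1)`. -/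
theorem contraction_centered_products
    {Z : Type*} [Fintype Z] [DecidableEq Z] [Nonempty Z]
    (N : ℕ)
    (P : ℕ → Matrix Z Z ℝ) (hP : ∀ h < N, IsRowStochastic fun x y => P h x y)
    (ν : ℕ → Z → ℝ)
    (hν : ∀ h < N, IsPMF (ν h) ∧ ∀ y, ∑ x, ν h x * P h x y = ν h y)
    (Pi : ℕ → Matrix Z Z ℝ) (hPi : ∀ h, Pi h = Matrix.of fun _ y => ν h y) :
    (∀ g : Z → ℝ,
        supNorm ((((List.range N).map fun h => P h - Pi h).prod).mulVec g)
          ≤ 2 * (∏ h ∈ Finset.range N, dobrushin (P h)) * supNorm g)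
    ∧ ∀ η : ℝ, 1 ≤ η → (∀ h < N, IsRegularKernel η fun x y => P h x y) →
        ∀ g : Z → ℝ,
          supNorm ((((List.range N).map fun h => P h - Pi h).prod).mulVec g)
            ≤ 2 * (1 - 1 / η) ^ N * supNorm g := by
  have hrow : ∀ M ∈ (List.range N).map fun h => P h - Pi h,
      ∀ x y, ∑ z, M x z = ∑ z, M y z := by
    simp only [List.mem_map, List.mem_range]
    rintro _ ⟨h, hh, rfl⟩ x y
    simp only [hPi, sum_sub_constRows_eq_zero (hP h hh) (hν h hh).1]
  have hnull : ∀ M ∈ (List.range N).map fun h => P h - Pi h, ∃ μ, IsPMF μ ∧ μ ᵥ* M = 0 := by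
    simp only [List.mem_map, List.mem_range]
    rintro _ ⟨h, hh, rfl⟩
    exact ⟨ν h, (hν h hh).1, hPi h ▸ vecMul_sub_constRows_eq_zero (hν h hh).1 (hν h hh).2⟩
  have hδ : (((List.range N).map fun h => P h - Pi h).map dobrushin).prod
      = ∏ h ∈ range N, dobrushin (P h) := by
    simp only [List.map_map, Function.comp_def, hPi, dobrushin_sub_constRows]
    rw [← List.toFinset_range, List.prod_toFinset _ List.nodup_range]
  have hcontract : ∀ g : Z → ℝ, supNorm ((((List.range N).map fun h => P h - Pi h).prod) *ᵥ g)
      ≤ 2 * (∏ h ∈ range N, dobrushin (P h)) * supNorm g :=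
    fun g => hδ ▸ supNorm_list_prod_mulVec_le hrow hnull g
  refine ⟨hcontract, fun η hη hreg g => (hcontract g).trans ?_⟩
  have hregular : ∏ h ∈ range N, dobrushin (P h) ≤ (1 - 1 / η) ^ N := by
    calc ∏ h ∈ range N, dobrushin (P h) ≤ ∏ _h ∈ range N, (1 - 1 / η) :=
          prod_le_prod (fun h _ => dobrushin_nonneg _) fun h hh =>
            dobrushin_le_of_isRegularKernel hη (hreg h (mem_range.1 hh))
      _ = (1 - 1 / η) ^ N := by rw [prod_const, card_range]
  gcongr
  exact supNorm_nonneg g
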